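/- Suppose each f_i : ℝ^d → ℝ (i = 1,…,n, n ≥ 2) is convex and Λ-smooth, F(w) = (1/n) ∑_{i=1}^n f_i(w) is λ-strongly convex with global minimizer w_* and F* = F(w_*). Let 1 ≤ b ≤ n, β(b) = (n−b)/(b(n−1)), N = (2/n) ∑_{i=1}^n ‖∇f_i(w_*)‖². Let H be a real symmetric d×d matrix with μ₁ I ⪯ H ⪯ μ₂ I (0 < μ₁ ≤ μ₂), and let α ∈ (0, λμ₁ / (μ₂² (λ + Λ β(b)) Λ)). Then for every w ∈ ℝ^d, averaging uniformly over all size-b subsets S of {1,…,n}: E_S[F(w − α H ∇F^S(w))] − F* ≤ [1 − 2α(λμ₁ − α μ₂² (λ + Λ β(b)) Λ)] (F(w) − F*) + (α² μ₂² Λ N)/2. -/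

import Mathlib

/-!
For the `Λ`-smooth average `F`, the descent lemma bounds `F(w - α H g_S)` for every batch `S`,
and averaging over the batches needs only the first two moments of the batch gradient `g_S`:
sampling without replacement puts each index in a fraction `b/n` of the batches and each pair in a
fraction `b(b-1)/(n(n-1))`, so `E g_S = ∇F(w)` and
`E ‖g_S‖² = β (1/n) ∑ ‖∇fᵢ(w)‖² + (1 - β) ‖∇F(w)‖²`.
The preconditioner gives `⟪∇F, H ∇F⟫ ≥ μ₁ ‖∇F‖²` and `‖H x‖ ≤ μ₂ ‖x‖`.
Co-coercivity of the convex smooth `fᵢ` at the minimizer gives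
`(1/n) ∑ ‖∇fᵢ(w)‖² ≤ 4Λ (F(w) - F*) + N`, and strong convexity gives the Polyak–Łojasiewicz bound
`‖∇F(w)‖² ≥ 2λ (F(w) - F*)`, which may be used because the step-size condition makes the
coefficient of `‖∇F(w)‖²` nonpositive.
-/

open scoped Matrix RealInnerProductSpace
open Finset

section Smooth

variable {E : Type*} [NormedAddCommGroup E] [InnerProductSpace ℝ E]

lemma two_mul_sub_le_norm_sq {a b lam : ℝ} {g x y : E} (hlam : 0 < lam)
    (h : b ≥ a + ⟪g, y - x⟫ + lam / 2 * ‖y - x‖ ^ 2) : 2 * lam * (a - b) ≤ ‖g‖ ^ 2 := by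
  have := neg_le_of_abs_le (abs_real_inner_le_norm g (y - x))
  nlinarith [sq_nonneg (‖g‖ - lam * ‖y - x‖)]

variable [CompleteSpace E]

def GradientLipschitzWith (L : ℝ) (h : E → ℝ) : Prop :=
  ∀ x y, ‖gradient h y - gradient h x‖ ≤ L * ‖y - x‖

lemma hasDerivAt_comp_add_smul {h : E → ℝ} (hd : Differentiable ℝ h) (x v : E) (t : ℝ) :
    HasDerivAt (fun s : ℝ => h (x + s • v)) ⟪gradient h (x + t • v), v⟫ t := by
  have hline : HasDerivAt (fun s : ℝ => x + s • v) v t := by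
    simpa using ((hasDerivAt_id t).smul_const v).const_add x
  have := (hd (x + t • v)).hasFDerivAt.comp_hasDerivAt t hline
  rw [← inner_gradient_left] at this
  exact this

lemma ConvexOn.add_inner_gradient_le {h : E → ℝ} (hc : ConvexOn ℝ Set.univ h)
    (hd : Differentiable ℝ h) (x y : E) : h x + ⟪gradient h x, y - x⟫ ≤ h y := by
  have hline : (fun s : ℝ => h (x + s • (y - x))) = h ∘ AffineMap.lineMap x y := by
    funext s
    simp [AffineMap.lineMap_apply_module', add_comm]
  have hφ : ConvexOn ℝ Set.univ fun s : ℝ => h (x + s • (y - x)) := by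
    simpa [hline] using hc.comp_affineMap (AffineMap.lineMap x y)
  have := hφ.le_slope_of_hasDerivAt (Set.mem_univ 0) (Set.mem_univ 1) one_pos
    (hasDerivAt_comp_add_smul hd x (y - x) 0)
  simp only [slope_def_field, zero_smul, add_zero, one_smul, add_sub_cancel, sub_zero,
    div_one] at this
  linarith

lemma GradientLipschitzWith.apply_le {h : E → ℝ} {L : ℝ} (hL : GradientLipschitzWith L h)
    (hd : Differentiable ℝ h) (x y : E) :
    h y ≤ h x + ⟪gradient h x, y - x⟫ + L / 2 * ‖y - x‖ ^ 2 := by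
  set v := y - x
  set ψ : ℝ → ℝ := fun t => h (x + t • v) - t * ⟪gradient h x, v⟫ - L / 2 * ‖v‖ ^ 2 * t ^ 2
  have hψ : ∀ t, HasDerivAt ψ (⟪gradient h (x + t • v) - gradient h x, v⟫ - L * ‖v‖ ^ 2 * t) t := by
    intro t
    have hlin : HasDerivAt (fun s : ℝ => s * ⟪gradient h x, v⟫) ⟪gradient h x, v⟫ t := by
      simpa using (hasDerivAt_id t).mul_const ⟪gradient h x, v⟫
    have hquad : HasDerivAt (fun s : ℝ => L / 2 * ‖v‖ ^ 2 * s ^ 2) (L * ‖v‖ ^ 2 * t) t := by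
      refine ((hasDerivAt_pow 2 t).const_mul (L / 2 * ‖v‖ ^ 2)).congr_deriv ?_
      norm_num
      ring
    rw [inner_sub_left]
    exact ((hasDerivAt_comp_add_smul hd x v t).sub hlin).sub hquad
  have hanti : AntitoneOn ψ (Set.Icc 0 1) := by
    refine antitoneOn_of_hasDerivWithinAt_nonpos (convex_Icc 0 1)
      (fun t _ => (hψ t).continuousAt.continuousWithinAt) (fun t _ => (hψ t).hasDerivWithinAt)
      fun t ht => ?_
    rw [interior_Icc] at ht
    have := calc ⟪gradient h (x + t • v) - gradient h x, v⟫
        ≤ ‖gradient h (x + t • v) - gradient h x‖ * ‖v‖ := real_inner_le_norm _ _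
      _ ≤ L * ‖x + t • v - x‖ * ‖v‖ := by gcongr; exact hL _ _
      _ = L * ‖v‖ ^ 2 * t := by simp [norm_smul, abs_of_pos ht.1]; ring
    linarith
  have := hanti (Set.left_mem_Icc.2 zero_le_one) (Set.right_mem_Icc.2 zero_le_one) zero_le_one
  norm_num [ψ, v, -inner_gradient_left] at this
  linarith

lemma GradientLipschitzWith.nonneg [Nontrivial E] {h : E → ℝ} {L : ℝ}
    (hL : GradientLipschitzWith L h) : 0 ≤ L := by
  obtain ⟨y, hy⟩ := exists_ne (0 : E)
  have := (norm_nonneg _).trans (hL 0 y)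
  rw [sub_zero] at this
  exact nonneg_of_mul_nonneg_left this (norm_pos_iff.2 hy)

lemma GradientLipschitzWith.sum_apply_sub_smul_le {F : E → ℝ} {L : ℝ}
    (hL : GradientLipschitzWith L F) (hd : Differentiable ℝ F) {κ : Type*} (s : Finset κ)
    (d : κ → E) (w : E) (α : ℝ) :
    ∑ k ∈ s, F (w - α • d k)
      ≤ #s * F w - α * ⟪gradient F w, ∑ k ∈ s, d k⟫ + L / 2 * α ^ 2 * ∑ k ∈ s, ‖d k‖ ^ 2 := by
  calc ∑ k ∈ s, F (w - α • d k)
      ≤ ∑ k ∈ s, (F w - α * ⟪gradient F w, d k⟫ + L / 2 * α ^ 2 * ‖d k‖ ^ 2) := by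
        refine sum_le_sum fun k _ => (hL.apply_le hd w _).trans_eq ?_
        rw [sub_sub_cancel_left, inner_neg_right, real_inner_smul_right, norm_neg, norm_smul,
          Real.norm_eq_abs, mul_pow, sq_abs]
        ring
    _ = _ := by
        rw [sum_add_distrib, sum_sub_distrib, sum_const, nsmul_eq_mul, inner_sum, mul_sum,
          mul_sum]

lemma ConvexOn.norm_gradient_sub_sq_le {h : E → ℝ} (hc : ConvexOn ℝ Set.univ h)
    (hd : Differentiable ℝ h) {L : ℝ} (hL : GradientLipschitzWith L h) (hL0 : 0 < L) (x y : E) :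
    ‖gradient h y - gradient h x‖ ^ 2 ≤ 2 * L * (h y - h x - ⟪gradient h x, y - x⟫) := by
  set c := gradient h x
  set φ : E → ℝ := fun z => h z - ⟪c, z⟫
  have hφ : ∀ z, HasGradientAt φ (gradient h z - c) z := by
    intro z
    rw [hasGradientAt_iff_hasFDerivAt]
    refine ((hd z).hasFDerivAt.sub (innerSL ℝ c).hasFDerivAt).congr_fderiv ?_
    ext u
    simp
  have hφL : GradientLipschitzWith L φ := fun a b => by
    simpa [(hφ _).gradient] using hL a b
  set g := gradient h y - c with hg
  have hmin : φ x ≤ φ (y - L⁻¹ • g) := by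
    have := hc.add_inner_gradient_le hd x (y - L⁻¹ • g)
    simp only [φ, inner_sub_right] at this ⊢
    linarith
  have hstep := hφL.apply_le (fun z => (hφ z).differentiableAt) y (y - L⁻¹ • g)
  rw [(hφ y).gradient, ← hg, sub_sub_cancel_left, inner_neg_right, real_inner_smul_right,
    real_inner_self_eq_norm_sq, norm_neg, norm_smul, Real.norm_of_nonneg (inv_nonneg.2 hL0.le)]
    at hstep
  have hgap : φ y - φ x = h y - h x - ⟪c, y - x⟫ := by
    simp only [φ, inner_sub_right]
    ring
  have e : L / 2 * (L⁻¹ * ‖g‖) ^ 2 = L⁻¹ * ‖g‖ ^ 2 / 2 := by field_simp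
  rw [e] at hstep
  calc ‖g‖ ^ 2 = L * (L⁻¹ * ‖g‖ ^ 2) := by field_simp
    _ ≤ L * (2 * (φ y - φ x)) := mul_le_mul_of_nonneg_left (by linarith) hL0.le
    _ = _ := by rw [hgap]; ring

lemma hasGradientAt_of_forall_eq_mean {n : ℕ} {f : Fin n → E → ℝ}
    (hd : ∀ i, Differentiable ℝ (f i)) {F : E → ℝ} (hF : ∀ w, F w = (n : ℝ)⁻¹ * ∑ i, f i w)
    (x : E) : HasGradientAt F ((n : ℝ)⁻¹ • ∑ i, gradient (f i) x) x := by
  obtain rfl : F = fun w => (n : ℝ)⁻¹ * ∑ i, f i w := funext hF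
  rw [hasGradientAt_iff_hasFDerivAt]
  have hsum := (HasFDerivAt.sum fun i (_ : i ∈ univ) => (hd i x).hasFDerivAt).const_mul (n : ℝ)⁻¹
  simp only [Finset.sum_apply] at hsum
  refine hsum.congr_fderiv ?_
  ext y
  simp

lemma GradientLipschitzWith.of_forall_eq_mean {n : ℕ} (hn : n ≠ 0) {f : Fin n → E → ℝ} {L : ℝ}
    (hd : ∀ i, Differentiable ℝ (f i)) (hL : ∀ i, GradientLipschitzWith L (f i)) {F : E → ℝ}
    (hF : ∀ w, F w = (n : ℝ)⁻¹ * ∑ i, f i w) : GradientLipschitzWith L F := by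
  intro x y
  rw [(hasGradientAt_of_forall_eq_mean hd hF x).gradient,
    (hasGradientAt_of_forall_eq_mean hd hF y).gradient, ← smul_sub, ← sum_sub_distrib,
    norm_smul, norm_inv, Real.norm_natCast]
  calc (n : ℝ)⁻¹ * ‖∑ i, (gradient (f i) y - gradient (f i) x)‖
      ≤ (n : ℝ)⁻¹ * ∑ _i : Fin n, L * ‖y - x‖ := by
        gcongr
        exact norm_sum_le_of_le _ fun i _ => hL i x y
    _ = L * ‖y - x‖ := by
        rw [sum_const, card_univ, Fintype.card_fin, nsmul_eq_mul]
        field_simp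

lemma sum_gradient_eq_zero_of_forall_le {n : ℕ} (hn : n ≠ 0) {f : Fin n → E → ℝ}
    (hd : ∀ i, Differentiable ℝ (f i)) {F : E → ℝ} (hF : ∀ w, F w = (n : ℝ)⁻¹ * ∑ i, f i w)
    {wstar : E} (hmin : ∀ w, F wstar ≤ F w) : ∑ i, gradient (f i) wstar = 0 := by
  have h0 : gradient F wstar = 0 := by
    simp [gradient, IsLocalMin.fderiv_eq_zero (Filter.Eventually.of_forall hmin)]
  rw [(hasGradientAt_of_forall_eq_mean hd hF wstar).gradient, smul_eq_zero] at h0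
  exact h0.resolve_left (by simpa using hn)

lemma mean_norm_gradient_sq_le {n : ℕ} {f : Fin n → E → ℝ} {L : ℝ} (hL0 : 0 < L)
    (hc : ∀ i, ConvexOn ℝ Set.univ (f i)) (hd : ∀ i, Differentiable ℝ (f i))
    (hL : ∀ i, GradientLipschitzWith L (f i)) {wstar : E}
    (hstar : ∑ i, gradient (f i) wstar = 0) (w : E) :
    (n : ℝ)⁻¹ * ∑ i, ‖gradient (f i) w‖ ^ 2
      ≤ 4 * L * ((n : ℝ)⁻¹ * ∑ i, f i w - (n : ℝ)⁻¹ * ∑ i, f i wstar)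
        + 2 / n * ∑ i, ‖gradient (f i) wstar‖ ^ 2 := by
  have hi : ∀ i, ‖gradient (f i) w‖ ^ 2 ≤ 4 * L * (f i w - f i wstar
      - ⟪gradient (f i) wstar, w - wstar⟫) + 2 * ‖gradient (f i) wstar‖ ^ 2 := by
    intro i
    have hco := (hc i).norm_gradient_sub_sq_le (hd i) (hL i) hL0 wstar w
    have hpar := parallelogram_law_with_norm ℝ (gradient (f i) w - gradient (f i) wstar)
      (gradient (f i) wstar)
    rw [sub_add_cancel] at hpar
    nlinarith [norm_nonneg (gradient (f i) w - gradient (f i) wstar - gradient (f i) wstar)]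
  have hsum := sum_le_sum fun i (_ : i ∈ univ) => hi i
  rw [sum_add_distrib, ← mul_sum, ← mul_sum, sum_sub_distrib, sum_sub_distrib, ← sum_inner,
    hstar, inner_zero_left, sub_zero] at hsum
  calc (n : ℝ)⁻¹ * ∑ i, ‖gradient (f i) w‖ ^ 2
      ≤ (n : ℝ)⁻¹ * (4 * L * (∑ i, f i w - ∑ i, f i wstar)
        + 2 * ∑ i, ‖gradient (f i) wstar‖ ^ 2) := by gcongr
    _ = _ := by ring

end Smooth

section Sampling

variable {ι : Type*} [Fintype ι] [DecidableEq ι]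

lemma card_filter_superset_powersetCard_mul_descFactorial (T : Finset ι) (b : ℕ) :
    #{S ∈ powersetCard b (univ : Finset ι) | T ⊆ S} * (Fintype.card ι).descFactorial #T
      = (Fintype.card ι).choose b * b.descFactorial #T := by
  by_cases hT : #T ≤ b
  · rw [card_filter_powersetCard_subset T univ b (subset_univ T) hT, card_univ,
      Nat.descFactorial_eq_factorial_mul_choose, Nat.descFactorial_eq_factorial_mul_choose]
    calc _ = (#T).factorial
          * ((Fintype.card ι).choose #T * (Fintype.card ι - #T).choose (b - #T)) := by ring
      _ = _ := by rw [← Nat.choose_mul hT]; ring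
  · rw [Nat.descFactorial_eq_zero_iff_lt.2 (not_le.1 hT), mul_zero, mul_eq_zero, card_eq_zero,
      filter_eq_empty_iff]
    refine Or.inl fun S hS hTS => hT ?_
    exact (mem_powersetCard.1 hS).2 ▸ card_le_card hTS

lemma card_filter_mem_powersetCard (b : ℕ) (i : ι) :
    (#{S ∈ powersetCard b (univ : Finset ι) | i ∈ S} : ℝ)
      = (Fintype.card ι).choose b * b / Fintype.card ι := by
  have h := card_filter_superset_powersetCard_mul_descFactorial {i} b
  simp only [card_singleton, Nat.descFactorial_one, singleton_subset_iff] at h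
  rw [eq_div_iff (by exact_mod_cast (Fintype.card_pos_iff.2 ⟨i⟩).ne')]
  exact_mod_cast h

lemma card_filter_mem_mem_powersetCard (b : ℕ) {i j : ι} (hij : i ≠ j) :
    (#{S ∈ powersetCard b (univ : Finset ι) | i ∈ S ∧ j ∈ S} : ℝ)
      = (Fintype.card ι).choose b * (b * (b - 1)) / (Fintype.card ι * (Fintype.card ι - 1)) := by
  have h := card_filter_superset_powersetCard_mul_descFactorial {i, j} b
  simp only [card_pair hij, insert_subset_iff, singleton_subset_iff] at h
  have hcard : (1 : ℝ) < Fintype.card ι := by exact_mod_cast Fintype.one_lt_card_iff.2 ⟨i, j, hij⟩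
  rw [eq_div_iff (by nlinarith), ← Nat.cast_descFactorial_two, ← Nat.cast_descFactorial_two]
  exact_mod_cast h

variable {E : Type*} [NormedAddCommGroup E] [InnerProductSpace ℝ E]

lemma sum_powersetCard_sum (b : ℕ) (v : ι → E) :
    ∑ S ∈ powersetCard b univ, ∑ i ∈ S, v i
      = ((Fintype.card ι).choose b * b / Fintype.card ι : ℝ) • ∑ i, v i := by
  rw [sum_comm' (t' := univ) (s' := fun i => {S ∈ powersetCard b univ | i ∈ S}) (by simp)]
  simp_rw [sum_const, ← Nat.cast_smul_eq_nsmul ℝ, card_filter_mem_powersetCard, smul_sum]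

lemma sum_powersetCard_norm_sum_sq (b : ℕ) (v : ι → E) :
    ∑ S ∈ powersetCard b univ, ‖∑ i ∈ S, v i‖ ^ 2
      = (Fintype.card ι).choose b * b / Fintype.card ι * ∑ i, ‖v i‖ ^ 2
        + (Fintype.card ι).choose b * (b * (b - 1)) / (Fintype.card ι * (Fintype.card ι - 1))
          * (‖∑ i, v i‖ ^ 2 - ∑ i, ‖v i‖ ^ 2) := by
  set p₁ : ℝ := (Fintype.card ι).choose b * b / Fintype.card ι with hp₁
  set p₂ : ℝ := (Fintype.card ι).choose b * (b * (b - 1))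
    / (Fintype.card ι * (Fintype.card ι - 1)) with hp₂
  have hrow : ∀ i, ∑ j, (#{S ∈ powersetCard b univ | i ∈ S ∧ j ∈ S} : ℝ) * ⟪v i, v j⟫
      = p₂ * ⟪v i, ∑ j, v j⟫ + (p₁ - p₂) * ‖v i‖ ^ 2 := by
    intro i
    rw [← add_sum_erase _ _ (mem_univ i), inner_sum, ← add_sum_erase _ _ (mem_univ i),
      sum_congr rfl fun j hj => by
        rw [card_filter_mem_mem_powersetCard b (ne_of_mem_erase hj).symm, ← hp₂],
      ← mul_sum]
    simp only [and_self, card_filter_mem_powersetCard, ← hp₁, real_inner_self_eq_norm_sq]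
    ring
  calc ∑ S ∈ powersetCard b univ, ‖∑ i ∈ S, v i‖ ^ 2
      = ∑ S ∈ powersetCard b univ, ∑ i ∈ S, ∑ j ∈ S, ⟪v i, v j⟫ := by
        simp_rw [← real_inner_self_eq_norm_sq, sum_inner, inner_sum]
    _ = ∑ i, ∑ j, (#{S ∈ powersetCard b univ | i ∈ S ∧ j ∈ S} : ℝ) * ⟪v i, v j⟫ := by
        rw [sum_comm' (t' := univ) (s' := fun i => {S ∈ powersetCard b univ | i ∈ S}) (by simp)]
        refine sum_congr rfl fun i _ => ?_
        rw [sum_comm' (t' := univ) (s' := fun j => {S ∈ powersetCard b univ | i ∈ S ∧ j ∈ S})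
          (by simp; tauto)]
        simp_rw [sum_const, nsmul_eq_mul]
    _ = p₁ * ∑ i, ‖v i‖ ^ 2 + p₂ * (‖∑ i, v i‖ ^ 2 - ∑ i, ‖v i‖ ^ 2) := by
        simp_rw [hrow, sum_add_distrib, ← mul_sum, ← sum_inner, real_inner_self_eq_norm_sq]
        ring

lemma sum_powersetCard_inv_smul_sum {b : ℕ} (hb : b ≠ 0) (v : ι → E) :
    ∑ S ∈ powersetCard b univ, (b : ℝ)⁻¹ • ∑ i ∈ S, v i
      = ((Fintype.card ι).choose b : ℝ) • ((Fintype.card ι : ℝ)⁻¹ • ∑ i, v i) := by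
  rw [← smul_sum, sum_powersetCard_sum, smul_smul, smul_smul]
  congr 1
  field_simp

lemma sum_powersetCard_norm_inv_smul_sum_sq (hι : 2 ≤ Fintype.card ι) {b : ℕ} (hb : 1 ≤ b)
    (v : ι → E) :
    ∑ S ∈ powersetCard b univ, ‖(b : ℝ)⁻¹ • ∑ i ∈ S, v i‖ ^ 2
      = ((Fintype.card ι).choose b : ℝ)
        * ((Fintype.card ι - b) / (b * (Fintype.card ι - 1))
            * ((Fintype.card ι : ℝ)⁻¹ * ∑ i, ‖v i‖ ^ 2)
          + (1 - (Fintype.card ι - b) / (b * (Fintype.card ι - 1)))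
            * ‖(Fintype.card ι : ℝ)⁻¹ • ∑ i, v i‖ ^ 2) := by
  have hn : (Fintype.card ι : ℝ) - 1 ≠ 0 := by
    have : (2 : ℝ) ≤ Fintype.card ι := by exact_mod_cast hι
    linarith
  have hb' : (b : ℝ) ≠ 0 := by positivity
  simp_rw [norm_smul, mul_pow, norm_inv, Real.norm_natCast, ← mul_sum,
    sum_powersetCard_norm_sum_sq]
  field_simp
  ring

end Sampling

section Preconditioner

variable {E : Type*} [NormedAddCommGroup E] [InnerProductSpace ℝ E] [FiniteDimensional ℝ E]

lemma LinearMap.IsSymmetric.norm_apply_le {T : E →ₗ[ℝ] E} (hT : T.IsSymmetric) {μ : ℝ}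
    (hμ : 0 ≤ μ) (h : ∀ x, |⟪T x, x⟫| ≤ μ * ‖x‖ ^ 2) (x : E) : ‖T x‖ ≤ μ * ‖x‖ := by
  set T' := LinearMap.toContinuousLinearMap T
  have hnorm : ‖T'‖ ≤ μ := by
    rw [T'.norm_eq_iSup_rayleighQuotient hT]
    refine ciSup_le fun x => ?_
    rcases eq_or_ne x 0 with rfl | hx
    · simpa using hμ
    · rw [ContinuousLinearMap.rayleighQuotient, ContinuousLinearMap.reApplyInnerSelf_apply,
        RCLike.re_to_real, abs_div, abs_sq, div_le_iff₀ (pow_pos (norm_pos_iff.2 hx) 2)]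
      exact h x
  exact (T'.le_opNorm x).trans (by gcongr)

end Preconditioner

section Matrix

variable {m : Type*} [Fintype m] [DecidableEq m] {H : Matrix m m ℝ} {μ : ℝ}

lemma Matrix.PosSemidef.mul_norm_sq_le_inner_toEuclideanLin (h : (H - μ • 1).PosSemidef)
    (x : EuclideanSpace ℝ m) : μ * ‖x‖ ^ 2 ≤ ⟪Matrix.toEuclideanLin H x, x⟫ := by
  have := (Matrix.isPositive_toEuclideanLin_iff.2 h).inner_nonneg_left x
  simpa [inner_sub_left, real_inner_smul_left, real_inner_self_eq_norm_sq] using this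

lemma Matrix.PosSemidef.inner_toEuclideanLin_le_mul_norm_sq (h : (μ • 1 - H).PosSemidef)
    (x : EuclideanSpace ℝ m) : ⟪Matrix.toEuclideanLin H x, x⟫ ≤ μ * ‖x‖ ^ 2 := by
  have := (Matrix.isPositive_toEuclideanLin_iff.2 h).inner_nonneg_left x
  simpa [inner_sub_left, real_inner_smul_left, real_inner_self_eq_norm_sq] using this

lemma Matrix.IsHermitian.norm_toEuclideanLin_le (hH : H.IsHermitian) {ν : ℝ} (hν : 0 ≤ ν)
    (hνμ : ν ≤ μ) (hlow : (H - ν • 1).PosSemidef) (hup : (μ • 1 - H).PosSemidef)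
    (x : EuclideanSpace ℝ m) : ‖Matrix.toEuclideanLin H x‖ ≤ μ * ‖x‖ := by
  refine (Matrix.isSymmetric_toEuclideanLin_iff.2 hH).norm_apply_le (hν.trans hνμ)
    (fun y => abs_le.2 ⟨?_, hup.inner_toEuclideanLin_le_mul_norm_sq y⟩) x
  nlinarith [hlow.mul_norm_sq_le_inner_toEuclideanLin y, sq_nonneg ‖y‖]

end Matrix

lemma batch_ratio_mem_Icc {n b : ℕ} (hn : 2 ≤ n) (hb1 : 1 ≤ b) (hbn : b ≤ n) :
    ((n : ℝ) - b) / (b * ((n : ℝ) - 1)) ∈ Set.Icc 0 1 := by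
  have hn' : (2 : ℝ) ≤ n := by exact_mod_cast hn
  have hb1' : (1 : ℝ) ≤ b := by exact_mod_cast hb1
  have hbn' : (b : ℝ) ≤ n := by exact_mod_cast hbn
  have hden : 0 < (b : ℝ) * (n - 1) := by nlinarith
  rw [Set.mem_Icc, le_div_iff₀ hden, div_le_one hden]
  constructor <;> nlinarith

section Minibatch

variable {E : Type*} [NormedAddCommGroup E] [InnerProductSpace ℝ E] [CompleteSpace E]

lemma sum_powersetCard_apply_sub_smul_le {n b : ℕ} (hn : 2 ≤ n) (hb1 : 1 ≤ b) {Λ : ℝ}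
    (hΛ : 0 ≤ Λ) {f : Fin n → E → ℝ} (hdiff : ∀ i, Differentiable ℝ (f i))
    (hsmooth : ∀ i, GradientLipschitzWith Λ (f i)) {F : E → ℝ}
    (hF : ∀ w, F w = (n : ℝ)⁻¹ * ∑ i, f i w) {T : E →ₗ[ℝ] E} {μ₂ : ℝ}
    (hup : ∀ x, ‖T x‖ ≤ μ₂ * ‖x‖) (α : ℝ) (w : E) :
    ∑ S ∈ powersetCard b (univ : Finset (Fin n)),
        F (w - α • T ((b : ℝ)⁻¹ • ∑ i ∈ S, gradient (f i) w))
      ≤ n.choose b * (F w - α * ⟪gradient F w, T (gradient F w)⟫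
        + Λ / 2 * α ^ 2 * μ₂ ^ 2 * (((n : ℝ) - b) / (b * ((n : ℝ) - 1))
            * ((n : ℝ)⁻¹ * ∑ i, ‖gradient (f i) w‖ ^ 2)
          + (1 - ((n : ℝ) - b) / (b * ((n : ℝ) - 1))) * ‖gradient F w‖ ^ 2)) := by
  have hgrad := fun x => (hasGradientAt_of_forall_eq_mean hdiff hF x).gradient
  set gS : Finset (Fin n) → E := fun S => (b : ℝ)⁻¹ • ∑ i ∈ S, gradient (f i) w
  have hmean : ∑ S ∈ powersetCard b univ, gS S = (n.choose b : ℝ) • gradient F w := by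
    simpa [hgrad] using sum_powersetCard_inv_smul_sum (by omega) fun i => gradient (f i) w
  have hnorm : ∑ S ∈ powersetCard b univ, ‖T (gS S)‖ ^ 2
      ≤ μ₂ ^ 2 * ∑ S ∈ powersetCard b univ, ‖gS S‖ ^ 2 := by
    rw [mul_sum]
    exact sum_le_sum fun S _ => by
      simpa [mul_pow] using pow_le_pow_left₀ (norm_nonneg _) (hup (gS S)) 2
  rw [sum_powersetCard_norm_inv_smul_sum_sq (by simpa using hn) hb1] at hnorm
  have hdesc := (GradientLipschitzWith.of_forall_eq_mean (by omega) hdiff hsmooth hF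
    ).sum_apply_sub_smul_le (fun x => (hasGradientAt_of_forall_eq_mean hdiff hF x).differentiableAt)
    (powersetCard b univ) (fun S => T (gS S)) w α
  rw [← map_sum, hmean, map_smul, real_inner_smul_right, card_powersetCard, card_univ,
    Fintype.card_fin] at hdesc
  simp only [Fintype.card_fin, ← hgrad] at hnorm
  linarith [mul_le_mul_of_nonneg_left hnorm (by positivity : 0 ≤ Λ / 2 * α ^ 2)]

theorem minibatch_preconditioned_step_le {n b : ℕ} (hn : 2 ≤ n) (hb1 : 1 ≤ b) (hbn : b ≤ n)
    {Λ lam : ℝ} (hlam : 0 < lam) {f : Fin n → E → ℝ} (hdiff : ∀ i, Differentiable ℝ (f i))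
    (hconv : ∀ i, ConvexOn ℝ Set.univ (f i)) (hsmooth : ∀ i, GradientLipschitzWith Λ (f i))
    {F : E → ℝ} (hF : ∀ w, F w = (n : ℝ)⁻¹ * ∑ i, f i w)
    (hsc : ∀ w w' : E, F w' ≥ F w + ⟪gradient F w, w' - w⟫ + lam / 2 * ‖w' - w‖ ^ 2)
    {wstar : E} (hmin : ∀ w, F wstar ≤ F w) {β N : ℝ}
    (hβ : β = ((n : ℝ) - b) / (b * ((n : ℝ) - 1)))
    (hN : N = 2 / (n : ℝ) * ∑ i, ‖gradient (f i) wstar‖ ^ 2)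
    {T : E →ₗ[ℝ] E} {μ₁ μ₂ : ℝ} (hlow : ∀ x, μ₁ * ‖x‖ ^ 2 ≤ ⟪T x, x⟫)
    (hup : ∀ x, ‖T x‖ ≤ μ₂ * ‖x‖) {α : ℝ} (hα0 : 0 < α)
    (hα1 : α < lam * μ₁ / (μ₂ ^ 2 * (lam + Λ * β) * Λ)) (w : E) :
    (∑ S ∈ powersetCard b (univ : Finset (Fin n)),
        F (w - α • T ((b : ℝ)⁻¹ • ∑ i ∈ S, gradient (f i) w))) / (n.choose b : ℝ) - F wstar
      ≤ (1 - 2 * α * (lam * μ₁ - α * μ₂ ^ 2 * (lam + Λ * β) * Λ)) * (F w - F wstar)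
        + α ^ 2 * μ₂ ^ 2 * Λ * N / 2 := by
  have hK : (0 : ℝ) < n.choose b := by exact_mod_cast Nat.choose_pos hbn
  -- `Λ`-smoothness forces `Λ ≥ 0` only on a nontrivial space
  rcases subsingleton_or_nontrivial E with hE | hE
  · have hconst : ∀ x, F x = F wstar := fun x => by rw [Subsingleton.elim x wstar]
    simp [hconst, hN, Subsingleton.elim _ (0 : E), hK.ne']
  have hΛ : 0 < Λ := (hsmooth ⟨0, by omega⟩).nonneg.lt_of_ne fun h => by
    simp [← h] at hα1; linarith
  have hμ₂ : μ₂ ≠ 0 := by rintro rfl; simp at hα1; linarith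
  obtain ⟨hβ0, hβ1⟩ := hβ ▸ batch_ratio_mem_Icc hn hb1 hbn
  have hαμ : α * μ₂ ^ 2 * Λ ≤ μ₁ := by
    have := (lt_div_iff₀ (by positivity)).1 hα1
    have : lam * (α * μ₂ ^ 2 * Λ) ≤ lam * μ₁ := by
      nlinarith [mul_nonneg (mul_nonneg (mul_nonneg hα0.le (sq_nonneg μ₂)) (sq_nonneg Λ)) hβ0]
    exact le_of_mul_le_mul_left this hlam
  have hstar := sum_gradient_eq_zero_of_forall_le (by omega) hdiff hF hmin
  obtain ⟨c, hc_def⟩ : ∃ c, c = Λ / 2 * α ^ 2 * μ₂ ^ 2 := ⟨_, rfl⟩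
  have hc : 0 ≤ c := hc_def ▸ by positivity
  have hstep := sum_powersetCard_apply_sub_smul_le hn hb1 hΛ.le hdiff hsmooth hF hup α w
  rw [← hβ, ← hc_def, ← div_le_iff₀' hK] at hstep
  set g := gradient F w
  set P := (n : ℝ)⁻¹ * ∑ i, ‖gradient (f i) w‖ ^ 2
  set D := F w - F wstar
  have hvar : P ≤ 4 * Λ * D + N := by
    simpa [D, hF, hN] using mean_norm_gradient_sq_le hΛ hconv hdiff hsmooth hstar w
  have hPL : 2 * lam * D ≤ ‖g‖ ^ 2 := two_mul_sub_le_norm_sq hlam (hsc w wstar)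
  have hcurv : μ₁ * ‖g‖ ^ 2 ≤ ⟪g, T g⟫ := real_inner_comm g (T g) ▸ hlow g
  have hD : 0 ≤ D := sub_nonneg.2 (hmin w)
  have hN0 : 0 ≤ N := by rw [hN]; positivity
  have hgain : 0 ≤ α * μ₁ - c * (1 - β) := by
    nlinarith [mul_le_mul_of_nonneg_left hαμ hα0.le,
      mul_le_of_le_one_right hc (by linarith : 1 - β ≤ 1)]
  calc _ ≤ D - α * μ₁ * ‖g‖ ^ 2 + c * (β * P + (1 - β) * ‖g‖ ^ 2) := by
        linarith [mul_le_mul_of_nonneg_left hcurv hα0.le]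
    _ = D - (α * μ₁ - c * (1 - β)) * ‖g‖ ^ 2 + c * β * P := by ring
    _ ≤ D - (α * μ₁ - c * (1 - β)) * (2 * lam * D) + c * β * (4 * Λ * D + N) := by
        linarith [mul_le_mul_of_nonneg_left hPL hgain,
          mul_le_mul_of_nonneg_left hvar (mul_nonneg hc hβ0)]
    _ ≤ _ := by
        have h1 := mul_nonneg (mul_nonneg (mul_nonneg hlam.le hc) (by linarith : 0 ≤ 1 + β)) hD
        have h2 := mul_nonneg (mul_nonneg hc (sub_nonneg.2 hβ1)) hN0
        subst hc_def
        linarith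

end Minibatch

theorem stmt13 (d n b : ℕ) (hn : 2 ≤ n) (hb1 : 1 ≤ b) (hbn : b ≤ n)
    (Λ lam : ℝ) (hlam : 0 < lam)
    (f : Fin n → EuclideanSpace ℝ (Fin d) → ℝ)
    (hdiff : ∀ i, Differentiable ℝ (f i))
    (hconv : ∀ i, ConvexOn ℝ Set.univ (f i))
    (hsmooth : ∀ i, ∀ w w' : EuclideanSpace ℝ (Fin d),
      ‖gradient (f i) w' - gradient (f i) w‖ ≤ Λ * ‖w' - w‖)
    (F : EuclideanSpace ℝ (Fin d) → ℝ) (hF : ∀ w, F w = (n : ℝ)⁻¹ * ∑ i, f i w)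
    (hsc : ∀ w w' : EuclideanSpace ℝ (Fin d),
      F w' ≥ F w + ⟪gradient F w, w' - w⟫ + lam / 2 * ‖w' - w‖ ^ 2)
    (wstar : EuclideanSpace ℝ (Fin d)) (hmin : ∀ w, F wstar ≤ F w)
    (β N : ℝ) (hβ : β = ((n : ℝ) - b) / (b * ((n : ℝ) - 1)))
    (hN : N = 2 / (n : ℝ) * ∑ i, ‖gradient (f i) wstar‖ ^ 2)
    (H : Matrix (Fin d) (Fin d) ℝ) (hsym : H.IsSymm)
    (μ₁ μ₂ : ℝ) (hμ : 0 < μ₁) (hμμ : μ₁ ≤ μ₂)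
    (hlow : (H - μ₁ • (1 : Matrix (Fin d) (Fin d) ℝ)).PosSemidef)
    (hup : (μ₂ • (1 : Matrix (Fin d) (Fin d) ℝ) - H).PosSemidef)
    (α : ℝ) (hα0 : 0 < α) (hα1 : α < lam * μ₁ / (μ₂ ^ 2 * (lam + Λ * β) * Λ))
    (w : EuclideanSpace ℝ (Fin d)) :
    (∑ S ∈ Finset.powersetCard b (Finset.univ : Finset (Fin n)),
        F (w - α • Matrix.toEuclideanLin H ((b : ℝ)⁻¹ • ∑ i ∈ S, gradient (f i) w)))
        / (n.choose b : ℝ) - F wstar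
      ≤ (1 - 2 * α * (lam * μ₁ - α * μ₂ ^ 2 * (lam + Λ * β) * Λ)) * (F w - F wstar)
        + α ^ 2 * μ₂ ^ 2 * Λ * N / 2 := by
  exact minibatch_preconditioned_step_le hn hb1 hbn hlam hdiff hconv hsmooth hF hsc hmin hβ hN
    hlow.mul_norm_sq_le_inner_toEuclideanLin
    ((Matrix.isHermitian_iff_isSymm.2 hsym).norm_toEuclideanLin_le hμ.le hμμ hlow hup) hα0 hα1 w
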